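/- arXiv:2204.07245 — 2 statements merged into one kernel-verified Lean document; each statement's English description precedes it below -/
import Mathlib

section
/- Let 2 ≥ α₁ > α₂ > 1. For i = 1, 2 let q_i ≥ 0 and ν_i a Borel measure on (0, +∞) with ∫₀^∞ (v² ∧ v) ν_i(dv) < +∞, set J_i(b) = (1/2)q_i b² + ∫₀^∞ (e^{−bv} − 1 + bv) ν_i(dv), and assume J_i is not identically zero and varies regularly at 0 with index α_i, and that either q_i > 0 or ∫₀^1 v ν_i(dv) = +∞ (infinite variation). Let G₁, G₂ : [0, +∞) → [0, +∞) be continuous with G₁(x) > 0, G₂(x) > 0 for x > 0 and with G₂/G₁ continuously differentiable on (0, +∞), and let η₁, η₂ > 0. Then the identity J₁(b·G₁(x)) + J₂(b·G₂(x)) = x·(η₁·b^{α₁} + η₂·b^{α₂}) holds for all b, x ≥ 0 if and only if there exist constants c₁, c₂ > 0 such that J₁(b) = c₁·b^{α₁} and J₂(b) = c₂·b^{α₂} for all b ≥ 0, and G₁(x) = (η₁·x/c₁)^{1/α₁}, G₂(x) = (η₂·x/c₂)^{1/α₂} for all x ≥ 0. -/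
/-!
Letting `b → 0` in the identity, the Potter bound `J₁(u) = o(u^α₂)` leaves
`J₂(b G₂(x)) ~ x η₂ b^α₂`, and regular variation of `J₂` forces `G₂(x) = G₂(1) x^(1/α₂)`.
Substituting `b = t x^(-1/α₂)` turns the identity into
`J₁(t a(x)) = η₁ x^(1 - α₁/α₂) t^α₁ + φ(t)` with `a(x) = G₁(x) x^(-1/α₂)` and
`φ(t) = η₂ t^α₂ - J₂(G₂(1) t)`. As `J₁` is monotone, `a(n)` decreases to some `r ≥ 0` and
`φ(t) = J₁(t r)`; this vanishes if `r = 0`, and if `r > 0` then `J₁(s w) - J₁(w)` is a multiple of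
`w^α₁` for `s = a(1)/r > 1`, which makes `J₁`, hence `φ`, a multiple of `t^α₁`. Since `J₂ ≥ 0` and
`α₁ > α₂` that multiple is `0`, so `J₂(G₂(1) t) = η₂ t^α₂` and `J₁(G₁(1) t) = η₁ t^α₁`; comparing
the coefficients of `b^α₁` and `b^α₂` in the identity then determines `G₁` and `G₂`.
-/

open Real Filter Set Topology MeasureTheory

lemma exp_neg_sub_one_add_nonneg (u : ℝ) : 0 ≤ exp (-u) - 1 + u := by
  linarith [add_one_le_exp (-u)]

lemma exp_neg_sub_one_add_pos {u : ℝ} (hu : 0 < u) : 0 < exp (-u) - 1 + u := by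
  linarith [add_one_lt_exp (x := -u) (by linarith)]

lemma exp_neg_sub_one_add_le_self {u : ℝ} (hu : 0 ≤ u) : exp (-u) - 1 + u ≤ u := by
  linarith [exp_le_one_iff.mpr (neg_nonpos.mpr hu)]

lemma exp_neg_sub_one_add_le_sq {u : ℝ} (hu : 0 ≤ u) : exp (-u) - 1 + u ≤ u ^ 2 := by
  rcases le_total u 1 with h | h
  · have := abs_exp_sub_one_sub_id_le (x := -u) (by rwa [abs_neg, abs_of_nonneg hu])
    rw [neg_sq] at this
    linarith [le_abs_self (exp (-u) - 1 - -u)]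
  · nlinarith [exp_neg_sub_one_add_le_self hu]

lemma exp_neg_sub_one_add_le_max_mul_min {b v : ℝ} (hb : 0 ≤ b) (hv : 0 ≤ v) :
    exp (-(b * v)) - 1 + b * v ≤ max (b ^ 2) b * min (v ^ 2) v := by
  rcases le_total v 1 with h | h
  · rw [min_eq_left (by nlinarith)]
    calc _ ≤ (b * v) ^ 2 := exp_neg_sub_one_add_le_sq (by positivity)
      _ = b ^ 2 * v ^ 2 := by ring
      _ ≤ _ := by gcongr; exact le_max_left _ _
  · rw [min_eq_right (by nlinarith)]
    calc _ ≤ b * v := exp_neg_sub_one_add_le_self (by positivity)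
      _ ≤ _ := by gcongr; exact le_max_right _ _

lemma monotoneOn_exp_neg_sub_one_add : MonotoneOn (fun u => exp (-u) - 1 + u) (Ici 0) := by
  intro a ha b _ hab
  have hexp : exp (-a) - exp (-b) = exp (-a) * (1 - exp (-(b - a))) := by
    rw [mul_sub, mul_one, ← exp_add]; ring_nf
  have h₁ : exp (-a) ≤ 1 := exp_le_one_iff.mpr (neg_nonpos.mpr ha)
  have h₂ : 0 ≤ 1 - exp (-(b - a)) := by
    linarith [exp_le_one_iff.mpr (neg_nonpos.mpr (sub_nonneg.mpr hab))]
  have h₃ : 1 - exp (-(b - a)) ≤ b - a := by linarith [add_one_le_exp (-(b - a))]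
  show exp (-a) - 1 + a ≤ exp (-b) - 1 + b
  nlinarith

noncomputable def laplaceExponent (q : ℝ) (ν : Measure ℝ) (b : ℝ) : ℝ :=
  1 / 2 * q * b ^ 2 + ∫ v in Ioi 0, (exp (-(b * v)) - 1 + b * v) ∂ν

section LaplaceExponent

variable {q : ℝ} {ν : Measure ℝ}

@[simp]
lemma laplaceExponent_zero : laplaceExponent q ν 0 = 0 := by
  simp [laplaceExponent]

lemma integrableOn_min_sq_self
    (hν : ∫⁻ v in Ioi 0, ENNReal.ofReal (min (v ^ 2) v) ∂ν < ⊤) :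
    IntegrableOn (fun v => min (v ^ 2) v) (Ioi 0) ν := by
  refine ⟨by fun_prop, (hasFiniteIntegral_iff_ofReal ?_).mpr hν⟩
  filter_upwards [ae_restrict_mem measurableSet_Ioi] with v hv
  exact le_min (sq_nonneg v) (le_of_lt hv)

lemma integrableOn_exp_neg_sub_one_add
    (hν : ∫⁻ v in Ioi 0, ENNReal.ofReal (min (v ^ 2) v) ∂ν < ⊤) {b : ℝ} (hb : 0 ≤ b) :
    IntegrableOn (fun v => exp (-(b * v)) - 1 + b * v) (Ioi 0) ν := by
  refine ((integrableOn_min_sq_self hν).const_mul (max (b ^ 2) b)).mono' (by fun_prop) ?_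
  filter_upwards [ae_restrict_mem measurableSet_Ioi] with v hv
  rw [norm_of_nonneg (exp_neg_sub_one_add_nonneg _)]
  exact exp_neg_sub_one_add_le_max_mul_min hb (le_of_lt hv)

lemma laplaceExponent_pos (hq : 0 ≤ q)
    (hν : ∫⁻ v in Ioi 0, ENNReal.ofReal (min (v ^ 2) v) ∂ν < ⊤)
    (hiv : 0 < q ∨ ∫⁻ v in Ioc 0 1, ENNReal.ofReal v ∂ν = ⊤) {b : ℝ} (hb : 0 < b) :
    0 < laplaceExponent q ν b := by
  have hint : 0 ≤ ∫ v in Ioi 0, (exp (-(b * v)) - 1 + b * v) ∂ν :=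
    integral_nonneg fun v => exp_neg_sub_one_add_nonneg _
  rcases hiv with hq | hiv
  · exact add_pos_of_pos_of_nonneg (by positivity) hint
  refine add_pos_of_nonneg_of_pos (by positivity) ?_
  rw [integral_pos_iff_support_of_nonneg (fun v => exp_neg_sub_one_add_nonneg _)
    (integrableOn_exp_neg_sub_one_add hν hb.le)]
  have hν₀ : ν (Ioc 0 1) ≠ 0 := fun h₀ => by
    rw [Measure.restrict_eq_zero.mpr h₀, lintegral_zero_measure] at hiv
    exact ENNReal.zero_ne_top hiv
  calc 0 < ν (Ioc 0 1) := pos_iff_ne_zero.mpr hν₀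
    _ ≤ ν.restrict (Ioi 0) (Ioi 0) := by
        rw [Measure.restrict_apply_self]; exact measure_mono Ioc_subset_Ioi_self
    _ ≤ _ := measure_mono fun v hv => (exp_neg_sub_one_add_pos (mul_pos hb hv)).ne'

lemma monotoneOn_laplaceExponent (hq : 0 ≤ q)
    (hν : ∫⁻ v in Ioi 0, ENNReal.ofReal (min (v ^ 2) v) ∂ν < ⊤) :
    MonotoneOn (laplaceExponent q ν) (Ici 0) := by
  intro a ha b hb hab
  refine add_le_add (by gcongr) (setIntegral_mono_on (integrableOn_exp_neg_sub_one_add hν ha)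
    (integrableOn_exp_neg_sub_one_add hν hb) measurableSet_Ioi fun v hv => ?_)
  have hv : 0 ≤ v := le_of_lt hv
  exact monotoneOn_exp_neg_sub_one_add (mul_nonneg ha hv) (mul_nonneg hb hv)
    (mul_le_mul_of_nonneg_right hab hv)

lemma continuousOn_laplaceExponent
    (hν : ∫⁻ v in Ioi 0, ENNReal.ofReal (min (v ^ 2) v) ∂ν < ⊤) :
    ContinuousOn (laplaceExponent q ν) (Ioi 0) := by
  intro p hp
  refine ContinuousAt.continuousWithinAt (ContinuousAt.add (by fun_prop) ?_)
  refine continuousAt_of_dominated (bound := fun v => max ((p + 1) ^ 2) (p + 1) * min (v ^ 2) v)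
    (Eventually.of_forall fun b => by fun_prop) ?_
    ((integrableOn_min_sq_self hν).const_mul _) (ae_of_all _ fun v => by fun_prop)
  filter_upwards [Ioo_mem_nhds hp (lt_add_one p)] with b hb
  filter_upwards [ae_restrict_mem measurableSet_Ioi] with v hv
  have hmin : 0 ≤ min (v ^ 2) v := le_min (sq_nonneg v) (le_of_lt hv)
  rw [norm_of_nonneg (exp_neg_sub_one_add_nonneg _)]
  refine (exp_neg_sub_one_add_le_max_mul_min hb.1.le (le_of_lt hv)).trans ?_
  gcongr
  exacts [hb.1.le, hb.2.le, hb.2.le]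

end LaplaceExponent

lemma tendsto_rpow_nhdsGT_zero {p : ℝ} (hp : 0 < p) :
    Tendsto (fun u : ℝ => u ^ p) (𝓝[>] 0) (𝓝 0) := by
  simpa [zero_rpow hp.ne'] using
    ((continuousAt_rpow_const 0 p (Or.inr hp.le)).tendsto.mono_left nhdsWithin_le_nhds)

lemma tendsto_mul_const_nhdsGT_zero {c : ℝ} (hc : 0 < c) :
    Tendsto (· * c) (𝓝[>] (0 : ℝ)) (𝓝[>] 0) := by
  simpa using Filter.TendstoNhdsWithinIoi.mul_const hc (tendsto_id (x := 𝓝[>] (0 : ℝ)))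

def RegularlyVaryingAtZero (J : ℝ → ℝ) (α : ℝ) : Prop :=
  ∀ b > 0, Tendsto (fun x => J (b * x) / J x) (𝓝[>] 0) (𝓝 (b ^ α))

namespace RegularlyVaryingAtZero

variable {J : ℝ → ℝ} {α : ℝ}

lemma tendsto_comp_mul_div (hJ : RegularlyVaryingAtZero J α) {c d : ℝ} (hc : 0 < c)
    (hd : 0 < d) : Tendsto (fun b => J (b * c) / J (b * d)) (𝓝[>] 0) (𝓝 ((c / d) ^ α)) := by
  refine ((hJ (c / d) (div_pos hc hd)).comp (tendsto_mul_const_nhdsGT_zero hd)).congr fun b => ?_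
  rw [Function.comp_apply, show c / d * (b * d) = b * c by field_simp]

/-- Potter-type bound: near `0`, halving the argument multiplies `J` by at most `2⁻¹ ^ β`, and
monotonicity fills in between the dyadic points. -/
lemma exists_le_mul_rpow (hJ : RegularlyVaryingAtZero J α) (hmono : MonotoneOn J (Ioi 0))
    (hpos : ∀ u > 0, 0 < J u) {β : ℝ} (hβ : 0 ≤ β) (hβα : β < α) :
    ∃ C δ : ℝ, 0 < δ ∧ ∀ u ∈ Ioc 0 δ, J u ≤ C * u ^ β := by
  have hhalf : ∀ᶠ u in 𝓝[>] 0, J (2⁻¹ * u) < (2⁻¹) ^ β * J u := by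
    filter_upwards [self_mem_nhdsWithin,
      (hJ 2⁻¹ (by norm_num)).eventually_lt_const (rpow_lt_rpow_of_exponent_gt (by norm_num)
        (by norm_num) hβα)] with u (hu : 0 < u) h
    rwa [div_lt_iff₀ (hpos u hu)] at h
  obtain ⟨δ, hδ : 0 < δ, hhalf⟩ := mem_nhdsGT_iff_exists_Ioc_subset.mp hhalf
  set f : ℝ → ℝ := fun u => J u / u ^ β
  have hstep : ∀ u ∈ Ioc 0 δ, f (2⁻¹ * u) ≤ f u := fun u hu => by
    have hu0 : 0 < u := hu.1
    simp only [f, mul_rpow (by norm_num : (0 : ℝ) ≤ 2⁻¹) hu0.le]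
    rw [div_le_div_iff₀ (by positivity) (by positivity)]
    have : J (2⁻¹ * u) < 2⁻¹ ^ β * J u := hhalf hu
    calc J (2⁻¹ * u) * u ^ β ≤ 2⁻¹ ^ β * J u * u ^ β := by gcongr
      _ = _ := by ring
  have hiter : ∀ n : ℕ, f (δ / 2 ^ n) ≤ f δ := by
    intro n
    induction n with
    | zero => simp
    | succ n ih =>
      refine le_trans ?_ ih
      have := hstep (δ / 2 ^ n) ⟨by positivity, div_le_self hδ.le (one_le_pow₀ one_le_two)⟩
      rwa [show 2⁻¹ * (δ / 2 ^ n) = δ / 2 ^ (n + 1) by ring] at this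
  refine ⟨f δ * 2 ^ β, δ, hδ, fun u hu => ?_⟩
  obtain ⟨n, hn, hn'⟩ := exists_nat_pow_near ((one_le_div hu.1).mpr hu.2) one_lt_two
  have hδn : 0 < δ / 2 ^ n := by positivity
  have hun : u ≤ δ / 2 ^ n := by rw [le_div_iff₀ (by positivity)]; rwa [le_div_iff₀ hu.1, mul_comm] at hn
  have hnu : δ / 2 ^ n ≤ 2 * u := by
    rw [div_le_iff₀ (by positivity)]; rw [div_lt_iff₀ hu.1, pow_succ] at hn'; linarith
  have hfδ : 0 ≤ f δ := div_nonneg (hpos δ hδ).le (rpow_nonneg hδ.le _)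
  calc J u ≤ J (δ / 2 ^ n) := hmono hu.1 hδn hun
    _ = f (δ / 2 ^ n) * (δ / 2 ^ n) ^ β := by
        simp only [f]; rw [div_mul_cancel₀ _ (rpow_pos_of_pos hδn _).ne']
    _ ≤ f δ * (2 * u) ^ β := by gcongr; exact hiter n
    _ = f δ * 2 ^ β * u ^ β := by rw [mul_rpow zero_le_two hu.1.le]; ring

lemma tendsto_div_rpow (hJ : RegularlyVaryingAtZero J α) (hmono : MonotoneOn J (Ioi 0))
    (hpos : ∀ u > 0, 0 < J u) {γ : ℝ} (hγ : 0 ≤ γ) (hγα : γ < α) :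
    Tendsto (fun u => J u / u ^ γ) (𝓝[>] 0) (𝓝 0) := by
  obtain ⟨C, δ, hδ, hC⟩ :=
    hJ.exists_le_mul_rpow hmono hpos (β := (γ + α) / 2) (by linarith) (by linarith)
  have hup := (tendsto_rpow_nhdsGT_zero (p := (γ + α) / 2 - γ) (by linarith)).const_mul C
  rw [mul_zero] at hup
  refine tendsto_of_tendsto_of_tendsto_of_le_of_le' tendsto_const_nhds hup ?_ ?_
  · filter_upwards [self_mem_nhdsWithin] with u (hu : 0 < u)
    exact div_nonneg (hpos u hu).le (rpow_nonneg hu.le _)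
  · filter_upwards [Ioc_mem_nhdsGT hδ] with u hu
    rw [div_le_iff₀ (rpow_pos_of_pos hu.1 _), mul_assoc, ← rpow_add hu.1, sub_add_cancel]
    exact hC u hu

end RegularlyVaryingAtZero

lemma eq_zero_of_map_mul_eq {h : ℝ → ℝ} {s : ℝ} (hs : 1 < s) (hper : ∀ w > 0, h (s * w) = h w)
    (hlim : Tendsto h (𝓝[>] 0) (𝓝 0)) {w : ℝ} (hw : 0 < w) : h w = 0 := by
  have hs₀ : 0 < s := zero_lt_one.trans hs
  have hpow : ∀ n : ℕ, h (w / s ^ n) = h w := by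
    intro n
    induction n with
    | zero => simp
    | succ n ih =>
      rw [← ih, ← hper _ (div_pos hw (pow_pos hs₀ _)), pow_succ]
      congr 1
      field_simp
  have hseq : Tendsto (fun n : ℕ => w / s ^ n) atTop (𝓝[>] 0) :=
    tendsto_nhdsWithin_of_tendsto_nhds_of_eventually_within _
      (tendsto_const_nhds.div_atTop (tendsto_pow_atTop_atTop_of_one_lt hs))
      (Eventually.of_forall fun n => div_pos hw (pow_pos hs₀ n))
  exact tendsto_nhds_unique ((hlim.comp hseq).congr hpow) tendsto_const_nhds |>.symm

lemma eq_mul_rpow_of_map_mul_eq_add {J : ℝ → ℝ} {s K α : ℝ} (hs : 1 < s) (hα : 0 < α)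
    (hJ : ∀ w > 0, J (s * w) = J w + K * w ^ α) (hlim : Tendsto J (𝓝[>] 0) (𝓝 0))
    {w : ℝ} (hw : 0 < w) : J w = K / (s ^ α - 1) * w ^ α := by
  have hsα : 0 < s ^ α - 1 := sub_pos.mpr (one_lt_rpow hs hα)
  have := eq_zero_of_map_mul_eq (h := fun w => J w - K / (s ^ α - 1) * w ^ α) hs
    (fun w hw => ?_) ?_ hw
  · linarith
  · rw [hJ w hw, mul_rpow (by positivity) hw.le]
    field_simp
    ring
  · simpa using hlim.sub ((tendsto_rpow_nhdsGT_zero hα).const_mul (K / (s ^ α - 1)))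

lemma strictAnti_of_map_mul_eq {J φ : ℝ → ℝ} {a ε : ℕ → ℝ} {α : ℝ}
    (hmono : MonotoneOn J (Ioi 0)) (ha : ∀ n, 0 < a n) (hε : StrictAnti ε)
    (hJ : ∀ n, ∀ t > 0, J (t * a n) = ε n * t ^ α + φ t) : StrictAnti a := by
  intro m n hmn
  by_contra! hle
  have := hmono (ha m) (ha n) hle
  rw [← one_mul (a m), ← one_mul (a n), hJ m 1 one_pos, hJ n 1 one_pos, one_rpow] at this
  linarith [hε hmn]

lemma exists_eq_mul_rpow_of_map_mul_eq {J φ : ℝ → ℝ} {a ε : ℕ → ℝ} {α : ℝ} (hα : 0 < α)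
    (hmono : MonotoneOn J (Ioi 0)) (hnn : ∀ u > 0, 0 ≤ J u) (hcont : ContinuousOn J (Ioi 0))
    (hlim : Tendsto J (𝓝[>] 0) (𝓝 0)) (ha : ∀ n, 0 < a n) (hε : StrictAnti ε)
    (hε₀ : Tendsto ε atTop (𝓝 0)) (hJ : ∀ n, ∀ t > 0, J (t * a n) = ε n * t ^ α + φ t) :
    ∃ c ≥ 0, ∀ t > 0, φ t = c * t ^ α := by
  have hanti := strictAnti_of_map_mul_eq hmono ha hε hJ
  have hbdd : BddBelow (range a) := ⟨0, forall_mem_range.mpr fun n => (ha n).le⟩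
  obtain ⟨r, hr₀, ha_lim, hra⟩ : ∃ r, 0 ≤ r ∧ Tendsto a atTop (𝓝 r) ∧ r < a 0 :=
    ⟨⨅ n, a n, le_ciInf fun n => (ha n).le, tendsto_atTop_ciInf hanti.antitone hbdd,
      (ciInf_le hbdd 1).trans_lt (hanti zero_lt_one)⟩
  have hφ : ∀ t > 0, Tendsto (fun n => J (t * a n)) atTop (𝓝 (φ t)) := fun t ht => by
    simpa [hJ _ t ht] using (hε₀.mul_const (t ^ α)).add_const (φ t)
  suffices ∃ c, ∀ t > 0, φ t = c * t ^ α by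
    obtain ⟨c, hc⟩ := this
    refine ⟨c, ?_, hc⟩
    rw [← mul_one c, ← one_rpow α, ← hc 1 one_pos]
    exact ge_of_tendsto (hφ 1 one_pos) (Eventually.of_forall fun n => hnn _ (by simpa using ha n))
  rcases hr₀.eq_or_lt with rfl | hr
  · refine ⟨0, fun t ht => ?_⟩
    have hta : Tendsto (fun n => t * a n) atTop (𝓝[>] 0) :=
      tendsto_nhdsWithin_of_tendsto_nhds_of_eventually_within _
        (by simpa using ha_lim.const_mul t)
        (Eventually.of_forall fun n => mul_pos ht (ha n))
    simpa using tendsto_nhds_unique (hφ t ht) (hlim.comp hta)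
  have hJr : ∀ t > 0, φ t = J (t * r) := fun t ht =>
    tendsto_nhds_unique (hφ t ht)
      (((hcont.continuousAt (Ioi_mem_nhds (mul_pos ht hr))).tendsto.comp (ha_lim.const_mul t)))
  have hstep : ∀ w > 0, J (a 0 / r * w) = J w + ε 0 / r ^ α * w ^ α := fun w hw => by
    have := hJ 0 (w / r) (div_pos hw hr)
    rw [hJr _ (div_pos hw hr), div_mul_cancel₀ _ hr.ne', div_rpow hw.le hr.le] at this
    rw [show a 0 / r * w = w / r * a 0 by ring, this]
    ring
  refine ⟨ε 0 / r ^ α / ((a 0 / r) ^ α - 1) * r ^ α, fun t ht => ?_⟩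
  rw [hJr t ht, eq_mul_rpow_of_map_mul_eq_add ((one_lt_div hr).mpr hra) hα hstep hlim
    (mul_pos ht hr), mul_rpow ht.le hr.le]
  ring

lemma nonpos_of_mul_rpow_le {c η α₁ α₂ : ℝ} (hα : α₂ < α₁)
    (h : ∀ t > 0, c * t ^ α₁ ≤ η * t ^ α₂) : c ≤ 0 := by
  have hlim : Tendsto (fun t => η * t ^ (α₂ - α₁)) atTop (𝓝 0) := by
    simpa [neg_sub] using (tendsto_rpow_neg_atTop (sub_pos.mpr hα)).const_mul η
  refine ge_of_tendsto hlim ?_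
  filter_upwards [eventually_gt_atTop 0] with t ht
  rw [rpow_sub ht, mul_div_assoc', le_div_iff₀ (rpow_pos_of_pos ht _)]
  exact h t ht

lemma eq_zero_of_mul_rpow_add_mul_rpow_eq_zero {A B α₁ α₂ : ℝ} (hα : α₂ < α₁)
    (h : ∀ b > 0, A * b ^ α₁ + B * b ^ α₂ = 0) : A = 0 ∧ B = 0 := by
  have h₁ := h 1 one_pos
  have h₂ := h 2 two_pos
  rw [one_rpow, one_rpow, mul_one, mul_one] at h₁
  have h2α : (2 : ℝ) ^ α₂ < 2 ^ α₁ := rpow_lt_rpow_of_exponent_lt one_lt_two hα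
  have hB : B * (2 ^ α₂ - 2 ^ α₁) = 0 := by linear_combination h₂ - 2 ^ α₁ * h₁
  have hB : B = 0 := (mul_eq_zero.mp hB).resolve_right (by linarith)
  exact ⟨by linarith, hB⟩

lemma eq_rpow_one_div_of_mul_rpow_eq {g c α y : ℝ} (hg : 0 ≤ g) (hc : 0 < c) (hα : α ≠ 0)
    (h : c * g ^ α = y) : g = (y / c) ^ (1 / α) := by
  rw [← h, mul_div_cancel_left₀ _ hc.ne', one_div, rpow_rpow_inv hg hα]

lemma eq_mul_rpow_of_map_mul_eq {J : ℝ → ℝ} {g η α : ℝ} (hg : 0 < g) (hα : α ≠ 0)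
    (hJ₀ : J 0 = 0) (h : ∀ t > 0, J (g * t) = η * t ^ α) {b : ℝ} (hb : 0 ≤ b) :
    J b = η / g ^ α * b ^ α := by
  rcases hb.eq_or_lt with rfl | hb
  · rw [hJ₀, zero_rpow hα, mul_zero]
  have := h (b / g) (div_pos hb hg)
  rw [mul_div_cancel₀ _ hg.ne', div_rpow hb.le hg.le] at this
  rw [this]
  ring

lemma eq_mul_rpow_inv_of_tendsto {J G : ℝ → ℝ} {α η : ℝ} (hJ : RegularlyVaryingAtZero J α)
    (hα : α ≠ 0) (hη : η ≠ 0) (hG : ∀ x > 0, 0 < G x)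
    (hlim : ∀ x > 0, Tendsto (fun b => J (b * G x) / b ^ α) (𝓝[>] 0) (𝓝 (x * η)))
    {x : ℝ} (hx : 0 < x) : G x = G 1 * x ^ α⁻¹ := by
  have hratio : (G x / G 1) ^ α = x := by
    refine tendsto_nhds_unique (hJ.tendsto_comp_mul_div (hG x hx) (hG 1 one_pos)) ?_
    have := (hlim x hx).div (hlim 1 one_pos) (by simpa using hη)
    rw [one_mul, mul_div_cancel_right₀ _ hη] at this
    refine this.congr' ?_
    filter_upwards [self_mem_nhdsWithin] with b (hb : 0 < b)
    exact div_div_div_cancel_right₀ (rpow_pos_of_pos hb α).ne' _ _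
  have hG₁ := hG 1 one_pos
  have h' : G x / G 1 = x ^ α⁻¹ := by
    conv_rhs => rw [← hratio]
    rw [rpow_rpow_inv (div_pos (hG x hx) hG₁).le hα]
  rw [← h', mul_div_cancel₀ _ hG₁.ne']

lemma strictAnti_natCast_add_one_rpow {e : ℝ} (he : e < 0) :
    StrictAnti fun n : ℕ => ((n : ℝ) + 1) ^ e := fun m n hmn =>
  rpow_lt_rpow_of_neg m.cast_add_one_pos (by exact_mod_cast Nat.succ_lt_succ hmn) he

lemma tendsto_natCast_add_one_rpow {e : ℝ} (he : e < 0) :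
    Tendsto (fun n : ℕ => ((n : ℝ) + 1) ^ e) atTop (𝓝 0) := by
  have h := tendsto_rpow_neg_atTop (neg_pos.mpr he)
  rw [neg_neg] at h
  exact h.comp (tendsto_natCast_atTop_atTop.atTop_add tendsto_const_nhds)

section GeneratingEquation

variable {J₁ J₂ G₁ G₂ : ℝ → ℝ} {α₁ α₂ η₁ η₂ : ℝ}

lemma tendsto_div_rpow_of_add_eq {x g₁ g₂ : ℝ} (hα : α₂ < α₁) (hg₁ : 0 < g₁)
    (hJ₁ : Tendsto (fun u => J₁ u / u ^ α₂) (𝓝[>] 0) (𝓝 0))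
    (h : ∀ b > 0, J₁ (b * g₁) + J₂ (b * g₂) = x * (η₁ * b ^ α₁ + η₂ * b ^ α₂)) :
    Tendsto (fun b => J₂ (b * g₂) / b ^ α₂) (𝓝[>] 0) (𝓝 (x * η₂)) := by
  have h₁ := (hJ₁.comp (tendsto_mul_const_nhdsGT_zero hg₁)).const_mul (g₁ ^ α₂)
  have h₂ := (tendsto_rpow_nhdsGT_zero (sub_pos.mpr hα)).const_mul (x * η₁)
  have := (h₂.add_const (x * η₂)).sub h₁
  rw [mul_zero, mul_zero, zero_add, sub_zero] at this
  refine this.congr' ?_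
  filter_upwards [self_mem_nhdsWithin] with b (hb : 0 < b)
  have hJ₂ : J₂ (b * g₂) = x * η₁ * b ^ α₁ + x * η₂ * b ^ α₂ - J₁ (b * g₁) := by
    linear_combination h b hb
  simp only [Function.comp_apply]
  rw [mul_rpow hb.le hg₁.le, rpow_sub hb, hJ₂]
  field_simp

lemma map_mul_eq_of_add_eq {x t g₁ g₂ : ℝ} (hα : α₂ ≠ 0) (hx : 0 < x) (ht : 0 < t)
    (h : ∀ b > 0, J₁ (b * g₁) + J₂ (b * (g₂ * x ^ α₂⁻¹)) = x * (η₁ * b ^ α₁ + η₂ * b ^ α₂)) :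
    J₁ (t * (g₁ * x ^ (-α₂⁻¹))) =
      η₁ * x ^ (1 - α₁ / α₂) * t ^ α₁ + (η₂ * t ^ α₂ - J₂ (g₂ * t)) := by
  have hxα := rpow_pos_of_pos hx (-α₂⁻¹)
  have := h (t * x ^ (-α₂⁻¹)) (mul_pos ht hxα)
  have e₀ : t * x ^ (-α₂⁻¹) * (g₂ * x ^ α₂⁻¹) = g₂ * t := by
    rw [rpow_neg hx.le]
    field_simp [(rpow_pos_of_pos hx α₂⁻¹).ne']
  have e₁ : x * (x ^ (-α₂⁻¹)) ^ α₁ = x ^ (1 - α₁ / α₂) := by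
    rw [← rpow_mul hx.le, sub_eq_add_neg, rpow_add hx, rpow_one, neg_mul, div_eq_inv_mul]
  have e₂ : x * (x ^ (-α₂⁻¹)) ^ α₂ = 1 := by
    rw [← rpow_mul hx.le, neg_mul, inv_mul_cancel₀ hα, rpow_neg_one, mul_inv_cancel₀ hx.ne']
  rw [e₀, mul_rpow ht.le hxα.le, mul_rpow ht.le hxα.le] at this
  rw [show t * (g₁ * x ^ (-α₂⁻¹)) = t * x ^ (-α₂⁻¹) * g₁ by ring]
  linear_combination this + η₁ * t ^ α₁ * e₁ + η₂ * t ^ α₂ * e₂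

theorem map_mul_eq_rpow_of_add_eq (hα₂ : 0 < α₂) (hα₁₂ : α₂ < α₁) (hη₁ : 0 < η₁)
    (hη₂ : 0 < η₂) (hJ₁pos : ∀ u > 0, 0 < J₁ u) (hJ₂pos : ∀ u > 0, 0 < J₂ u)
    (hJ₁mono : MonotoneOn J₁ (Ioi 0)) (hJ₁cont : ContinuousOn J₁ (Ioi 0))
    (hreg₁ : RegularlyVaryingAtZero J₁ α₁) (hreg₂ : RegularlyVaryingAtZero J₂ α₂)
    (hG₁pos : ∀ x > 0, 0 < G₁ x) (hG₂pos : ∀ x > 0, 0 < G₂ x)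
    (h : ∀ b > 0, ∀ x > 0, J₁ (b * G₁ x) + J₂ (b * G₂ x) = x * (η₁ * b ^ α₁ + η₂ * b ^ α₂)) :
    (∀ t > 0, J₁ (G₁ 1 * t) = η₁ * t ^ α₁) ∧ ∀ t > 0, J₂ (G₂ 1 * t) = η₂ * t ^ α₂ := by
  have hα₁ : 0 < α₁ := hα₂.trans hα₁₂
  have hG₂ : ∀ x > 0, G₂ x = G₂ 1 * x ^ α₂⁻¹ := fun x hx =>
    eq_mul_rpow_inv_of_tendsto hreg₂ hα₂.ne' hη₂.ne' hG₂pos (fun y hy =>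
      tendsto_div_rpow_of_add_eq hα₁₂ (hG₁pos y hy)
        (hreg₁.tendsto_div_rpow hJ₁mono hJ₁pos hα₂.le hα₁₂) fun b hb => h b hb y hy) hx
  have key : ∀ x > 0, ∀ t > 0, J₁ (t * (G₁ x * x ^ (-α₂⁻¹))) =
      η₁ * x ^ (1 - α₁ / α₂) * t ^ α₁ + (η₂ * t ^ α₂ - J₂ (G₂ 1 * t)) := fun x hx t ht =>
    map_mul_eq_of_add_eq hα₂.ne' hx ht fun b hb => hG₂ x hx ▸ h b hb x hx
  have he : 1 - α₁ / α₂ < 0 := by rw [sub_neg, one_lt_div hα₂]; exact hα₁₂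
  obtain ⟨c, hc, hφ⟩ := exists_eq_mul_rpow_of_map_mul_eq hα₁ hJ₁mono
    (fun u hu => (hJ₁pos u hu).le) hJ₁cont
    (by simpa using hreg₁.tendsto_div_rpow hJ₁mono hJ₁pos le_rfl hα₁)
    (fun n => mul_pos (hG₁pos _ n.cast_add_one_pos) (rpow_pos_of_pos n.cast_add_one_pos _))
    ((strictAnti_natCast_add_one_rpow he).const_mul hη₁)
    (by simpa using (tendsto_natCast_add_one_rpow he).const_mul η₁)
    fun n t ht => key _ n.cast_add_one_pos t ht
  have hc₀ : c = 0 := le_antisymm (nonpos_of_mul_rpow_le (η := η₂) hα₁₂ fun t ht => by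
    linarith [hφ t ht, hJ₂pos (G₂ 1 * t) (mul_pos (hG₂pos 1 one_pos) ht)]) hc
  have hJ₂pow : ∀ t > 0, J₂ (G₂ 1 * t) = η₂ * t ^ α₂ := fun t ht => by
    linarith [hφ t ht, hc₀ ▸ zero_mul (t ^ α₁)]
  refine ⟨fun t ht => ?_, hJ₂pow⟩
  have := key 1 one_pos t ht
  simp only [one_rpow, mul_one, hJ₂pow t ht, sub_self, add_zero] at this
  rwa [mul_comm]

theorem eq_mul_rpow_of_add_eq (hα₂ : 0 < α₂) (hα₁₂ : α₂ < α₁) (hη₁ : 0 < η₁) (hη₂ : 0 < η₂)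
    (hJ₁₀ : J₁ 0 = 0) (hJ₂₀ : J₂ 0 = 0) (hJ₁pos : ∀ u > 0, 0 < J₁ u)
    (hJ₂pos : ∀ u > 0, 0 < J₂ u) (hJ₁mono : MonotoneOn J₁ (Ioi 0))
    (hJ₁cont : ContinuousOn J₁ (Ioi 0)) (hreg₁ : RegularlyVaryingAtZero J₁ α₁)
    (hreg₂ : RegularlyVaryingAtZero J₂ α₂) (hG₁nn : ∀ x ≥ 0, 0 ≤ G₁ x)
    (hG₂nn : ∀ x ≥ 0, 0 ≤ G₂ x) (hG₁pos : ∀ x > 0, 0 < G₁ x) (hG₂pos : ∀ x > 0, 0 < G₂ x)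
    (h : ∀ b ≥ 0, ∀ x ≥ 0, J₁ (b * G₁ x) + J₂ (b * G₂ x) = x * (η₁ * b ^ α₁ + η₂ * b ^ α₂)) :
    ∃ c₁ > 0, ∃ c₂ > 0, (∀ b ≥ 0, J₁ b = c₁ * b ^ α₁ ∧ J₂ b = c₂ * b ^ α₂) ∧
      ∀ x ≥ 0, G₁ x = (η₁ * x / c₁) ^ (1 / α₁) ∧ G₂ x = (η₂ * x / c₂) ^ (1 / α₂) := by
  have hα₁ : 0 < α₁ := hα₂.trans hα₁₂
  obtain ⟨hJ₁pow, hJ₂pow⟩ := map_mul_eq_rpow_of_add_eq hα₂ hα₁₂ hη₁ hη₂ hJ₁pos hJ₂pos hJ₁mono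
    hJ₁cont hreg₁ hreg₂ hG₁pos hG₂pos fun b hb x hx => h b hb.le x hx.le
  set c₁ := η₁ / G₁ 1 ^ α₁
  set c₂ := η₂ / G₂ 1 ^ α₂
  have hJ₁' : ∀ b ≥ 0, J₁ b = c₁ * b ^ α₁ := fun b hb =>
    eq_mul_rpow_of_map_mul_eq (hG₁pos 1 one_pos) hα₁.ne' hJ₁₀ hJ₁pow hb
  have hJ₂' : ∀ b ≥ 0, J₂ b = c₂ * b ^ α₂ := fun b hb =>
    eq_mul_rpow_of_map_mul_eq (hG₂pos 1 one_pos) hα₂.ne' hJ₂₀ hJ₂pow hb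
  have hc₁ : 0 < c₁ := div_pos hη₁ (rpow_pos_of_pos (hG₁pos 1 one_pos) _)
  have hc₂ : 0 < c₂ := div_pos hη₂ (rpow_pos_of_pos (hG₂pos 1 one_pos) _)
  refine ⟨c₁, hc₁, c₂, hc₂, fun b hb => ⟨hJ₁' b hb, hJ₂' b hb⟩, fun x hx => ?_⟩
  obtain ⟨h₁, h₂⟩ := eq_zero_of_mul_rpow_add_mul_rpow_eq_zero hα₁₂
    (A := c₁ * G₁ x ^ α₁ - η₁ * x) (B := c₂ * G₂ x ^ α₂ - η₂ * x) fun b hb => by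
      have := h b hb.le x hx
      rw [hJ₁' _ (mul_nonneg hb.le (hG₁nn x hx)), hJ₂' _ (mul_nonneg hb.le (hG₂nn x hx)),
        mul_rpow hb.le (hG₁nn x hx), mul_rpow hb.le (hG₂nn x hx)] at this
      linear_combination this
  exact ⟨eq_rpow_one_div_of_mul_rpow_eq (hG₁nn x hx) hc₁ hα₁.ne' (by linear_combination h₁),
    eq_rpow_one_div_of_mul_rpow_eq (hG₂nn x hx) hc₂ hα₂.ne' (by linear_combination h₂)⟩

theorem add_eq_of_eq_mul_rpow {c₁ c₂ : ℝ} (hα₁ : α₁ ≠ 0) (hα₂ : α₂ ≠ 0) (hη₁ : 0 ≤ η₁)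
    (hη₂ : 0 ≤ η₂) (hc₁ : 0 < c₁) (hc₂ : 0 < c₂)
    (hJ : ∀ b ≥ 0, J₁ b = c₁ * b ^ α₁ ∧ J₂ b = c₂ * b ^ α₂)
    (hG : ∀ x ≥ 0, G₁ x = (η₁ * x / c₁) ^ (1 / α₁) ∧ G₂ x = (η₂ * x / c₂) ^ (1 / α₂))
    {b x : ℝ} (hb : 0 ≤ b) (hx : 0 ≤ x) :
    J₁ (b * G₁ x) + J₂ (b * G₂ x) = x * (η₁ * b ^ α₁ + η₂ * b ^ α₂) := by
  obtain ⟨hG₁, hG₂⟩ := hG x hx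
  have hG₁nn : 0 ≤ G₁ x := hG₁ ▸ rpow_nonneg (by positivity) _
  have hG₂nn : 0 ≤ G₂ x := hG₂ ▸ rpow_nonneg (by positivity) _
  rw [(hJ _ (mul_nonneg hb hG₁nn)).1, (hJ _ (mul_nonneg hb hG₂nn)).2, mul_rpow hb hG₁nn,
    mul_rpow hb hG₂nn, hG₁, hG₂, one_div, one_div, rpow_inv_rpow (by positivity) hα₁,
    rpow_inv_rpow (by positivity) hα₂]
  field_simp

end GeneratingEquation

theorem stmt13_general (α₁ α₂ : ℝ) (hα₂ : 1 < α₂) (hα₁₂ : α₂ < α₁)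
    (q₁ q₂ : ℝ) (hq₁ : 0 ≤ q₁) (hq₂ : 0 ≤ q₂)
    (ν₁ ν₂ : Measure ℝ)
    (hν₁ : ∫⁻ v in Set.Ioi (0:ℝ), ENNReal.ofReal (min (v ^ 2) v) ∂ν₁ < ⊤)
    (hν₂ : ∫⁻ v in Set.Ioi (0:ℝ), ENNReal.ofReal (min (v ^ 2) v) ∂ν₂ < ⊤)
    (J₁ J₂ : ℝ → ℝ)
    (hJ₁ : ∀ b ≥ (0:ℝ), J₁ b = (1/2) * q₁ * b ^ 2
        + ∫ v in Set.Ioi (0:ℝ), (Real.exp (-(b * v)) - 1 + b * v) ∂ν₁)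
    (hJ₂ : ∀ b ≥ (0:ℝ), J₂ b = (1/2) * q₂ * b ^ 2
        + ∫ v in Set.Ioi (0:ℝ), (Real.exp (-(b * v)) - 1 + b * v) ∂ν₂)
    (hreg₁ : ∀ b > (0:ℝ), Tendsto (fun x => J₁ (b * x) / J₁ x)
      (nhdsWithin 0 (Set.Ioi 0)) (nhds (b ^ α₁)))
    (hreg₂ : ∀ b > (0:ℝ), Tendsto (fun x => J₂ (b * x) / J₂ x)
      (nhdsWithin 0 (Set.Ioi 0)) (nhds (b ^ α₂)))
    (hiv₁ : 0 < q₁ ∨ ∫⁻ v in Set.Ioc (0:ℝ) 1, ENNReal.ofReal v ∂ν₁ = ⊤)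
    (hiv₂ : 0 < q₂ ∨ ∫⁻ v in Set.Ioc (0:ℝ) 1, ENNReal.ofReal v ∂ν₂ = ⊤)
    (G₁ G₂ : ℝ → ℝ)
    (hG₁nn : ∀ x ≥ (0:ℝ), 0 ≤ G₁ x) (hG₂nn : ∀ x ≥ (0:ℝ), 0 ≤ G₂ x)
    (hG₁pos : ∀ x > (0:ℝ), 0 < G₁ x) (hG₂pos : ∀ x > (0:ℝ), 0 < G₂ x)
    (η₁ η₂ : ℝ) (hη₁ : 0 < η₁) (hη₂ : 0 < η₂) :
    (∀ b ≥ (0:ℝ), ∀ x ≥ (0:ℝ),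
        J₁ (b * G₁ x) + J₂ (b * G₂ x) = x * (η₁ * b ^ α₁ + η₂ * b ^ α₂)) ↔
      (∃ c₁ > (0:ℝ), ∃ c₂ > (0:ℝ),
        (∀ b ≥ (0:ℝ), J₁ b = c₁ * b ^ α₁ ∧ J₂ b = c₂ * b ^ α₂) ∧
        (∀ x ≥ (0:ℝ), G₁ x = (η₁ * x / c₁) ^ (1 / α₁) ∧
          G₂ x = (η₂ * x / c₂) ^ (1 / α₂))) := by
  have hα₂₀ : 0 < α₂ := zero_lt_one.trans hα₂
  have hJ₁' : EqOn J₁ (laplaceExponent q₁ ν₁) (Ici 0) := hJ₁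
  have hJ₂' : EqOn J₂ (laplaceExponent q₂ ν₂) (Ici 0) := hJ₂
  have hJ₁pos : ∀ u > 0, 0 < J₁ u := fun u hu =>
    hJ₁' (le_of_lt hu) ▸ laplaceExponent_pos hq₁ hν₁ hiv₁ hu
  have hJ₂pos : ∀ u > 0, 0 < J₂ u := fun u hu =>
    hJ₂' (le_of_lt hu) ▸ laplaceExponent_pos hq₂ hν₂ hiv₂ hu
  have hJ₁mono : MonotoneOn J₁ (Ioi 0) :=
    ((monotoneOn_laplaceExponent hq₁ hν₁).congr hJ₁'.symm).mono Ioi_subset_Ici_self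
  have hJ₁cont : ContinuousOn J₁ (Ioi 0) :=
    (continuousOn_laplaceExponent hν₁).congr (hJ₁'.mono Ioi_subset_Ici_self)
  refine ⟨eq_mul_rpow_of_add_eq hα₂₀ hα₁₂ hη₁ hη₂ ((hJ₁' self_mem_Ici).trans laplaceExponent_zero)
    ((hJ₂' self_mem_Ici).trans laplaceExponent_zero) hJ₁pos hJ₂pos hJ₁mono hJ₁cont hreg₁ hreg₂
    hG₁nn hG₂nn hG₁pos hG₂pos, ?_⟩
  rintro ⟨c₁, hc₁, c₂, hc₂, hJ, hG⟩ b hb x hx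
  exact add_eq_of_eq_mul_rpow (hα₂₀.trans hα₁₂).ne' hα₂₀.ne' hη₁.le hη₂.le hc₁ hc₂ hJ hG hb hx

/-- Generating equations on a plane, case `J_μ̃(b) = η₁b^{α₁} + η₂b^{α₂}` with
`2 ≥ α₁ > α₂ > 1`: the identity `J₁(bG₁(x)) + J₂(bG₂(x)) = x(η₁b^{α₁} + η₂b^{α₂})`
holds for all `b, x ≥ 0` iff `J₁(b) = c₁b^{α₁}`, `J₂(b) = c₂b^{α₂}` and
`G₁(x) = (η₁x/c₁)^{1/α₁}`, `G₂(x) = (η₂x/c₂)^{1/α₂}` for some `c₁, c₂ > 0`. -/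
theorem stmt13 (α₁ α₂ : ℝ) (hα₂ : 1 < α₂) (hα₁₂ : α₂ < α₁) (hα₁ : α₁ ≤ 2)
    (q₁ q₂ : ℝ) (hq₁ : 0 ≤ q₁) (hq₂ : 0 ≤ q₂)
    (ν₁ ν₂ : Measure ℝ)
    (hν₁ : ∫⁻ v in Set.Ioi (0:ℝ), ENNReal.ofReal (min (v ^ 2) v) ∂ν₁ < ⊤)
    (hν₂ : ∫⁻ v in Set.Ioi (0:ℝ), ENNReal.ofReal (min (v ^ 2) v) ∂ν₂ < ⊤)
    (J₁ J₂ : ℝ → ℝ)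
    (hJ₁ : ∀ b ≥ (0:ℝ), J₁ b = (1/2) * q₁ * b ^ 2
        + ∫ v in Set.Ioi (0:ℝ), (Real.exp (-(b * v)) - 1 + b * v) ∂ν₁)
    (hJ₂ : ∀ b ≥ (0:ℝ), J₂ b = (1/2) * q₂ * b ^ 2
        + ∫ v in Set.Ioi (0:ℝ), (Real.exp (-(b * v)) - 1 + b * v) ∂ν₂)
    (hJ₁ne : ∃ b ≥ (0:ℝ), J₁ b ≠ 0) (hJ₂ne : ∃ b ≥ (0:ℝ), J₂ b ≠ 0)
    (hreg₁ : ∀ b > (0:ℝ), Tendsto (fun x => J₁ (b * x) / J₁ x)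
      (nhdsWithin 0 (Set.Ioi 0)) (nhds (b ^ α₁)))
    (hreg₂ : ∀ b > (0:ℝ), Tendsto (fun x => J₂ (b * x) / J₂ x)
      (nhdsWithin 0 (Set.Ioi 0)) (nhds (b ^ α₂)))
    (hiv₁ : 0 < q₁ ∨ ∫⁻ v in Set.Ioc (0:ℝ) 1, ENNReal.ofReal v ∂ν₁ = ⊤)
    (hiv₂ : 0 < q₂ ∨ ∫⁻ v in Set.Ioc (0:ℝ) 1, ENNReal.ofReal v ∂ν₂ = ⊤)
    (G₁ G₂ : ℝ → ℝ)
    (hG₁c : ContinuousOn G₁ (Set.Ici 0)) (hG₂c : ContinuousOn G₂ (Set.Ici 0))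
    (hG₁nn : ∀ x ≥ (0:ℝ), 0 ≤ G₁ x) (hG₂nn : ∀ x ≥ (0:ℝ), 0 ≤ G₂ x)
    (hG₁pos : ∀ x > (0:ℝ), 0 < G₁ x) (hG₂pos : ∀ x > (0:ℝ), 0 < G₂ x)
    (hratio : ContDiffOn ℝ 1 (fun x => G₂ x / G₁ x) (Set.Ioi 0))
    (η₁ η₂ : ℝ) (hη₁ : 0 < η₁) (hη₂ : 0 < η₂) :
    (∀ b ≥ (0:ℝ), ∀ x ≥ (0:ℝ),
        J₁ (b * G₁ x) + J₂ (b * G₂ x) = x * (η₁ * b ^ α₁ + η₂ * b ^ α₂)) ↔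
      (∃ c₁ > (0:ℝ), ∃ c₂ > (0:ℝ),
        (∀ b ≥ (0:ℝ), J₁ b = c₁ * b ^ α₁ ∧ J₂ b = c₂ * b ^ α₂) ∧
        (∀ x ≥ (0:ℝ), G₁ x = (η₁ * x / c₁) ^ (1 / α₁) ∧
          G₂ x = (η₂ * x / c₂) ^ (1 / α₂))) :=
  stmt13_general α₁ α₂ hα₂ hα₁₂ q₁ q₂ hq₁ hq₂ ν₁ ν₂ hν₁ hν₂ J₁ J₂ hJ₁ hJ₂ hreg₁ hreg₂ hiv₁ hiv₂ G₁
    G₂ hG₁nn hG₂nn hG₁pos hG₂pos η₁ η₂ hη₁ hη₂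
end

section
/- Let Q be a symmetric positive semidefinite real d×d matrix, α ∈ (1, 2), c ≥ 0, and let G : (0, +∞) → ℝ^d \ {0} be such that lim_{x→0+} |G(x)| = 0, the limit G₀ = lim_{x→0+} G(x)/|G(x)| exists, and lim_{x→0+} x / |G(x)|^α = L for some L ∈ (0, +∞). If (1/2)·⟨Q·G(x), G(x)⟩ = c·x for every x > 0, then c = 0. -/
/-!
Normalising, `u(x) = G(x)/|G(x)|` converges, so `⟨Q u(x), u(x)⟩` stays bounded as `x → 0+`.
But `⟨Q u(x), u(x)⟩ = 2c · x/|G(x)|²`, and `x/|G(x)|² = (x/|G(x)|^α) · |G(x)|^(α-2) → ∞`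
because `α < 2` and `|G(x)| → 0`. Hence `c = 0`.
-/

open Real Filter Set Matrix Topology

theorem tendsto_div_sq_atTop_of_tendsto_div_rpow {ι : Type*} {l : Filter ι} {t g : ι → ℝ}
    {α L : ℝ} (hα : α < 2) (hL : 0 < L) (hg : Tendsto g l (𝓝[>] 0))
    (htg : Tendsto (fun i => t i / g i ^ α) l (𝓝 L)) :
    Tendsto (fun i => t i / g i ^ 2) l atTop := by
  have hg_pos : ∀ᶠ i in l, 0 < g i := hg self_mem_nhdsWithin
  have hpow : Tendsto (fun i => g i ^ (α - 2)) l atTop :=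
    (tendsto_rpow_neg_nhdsGT_zero (by linarith)).comp hg
  refine (htg.pos_mul_atTop hL hpow).congr' ?_
  filter_upwards [hg_pos] with i hi
  rw [rpow_sub hi, rpow_two]
  field_simp

theorem eq_zero_of_tendsto_const_mul_of_tendsto_atTop {ι : Type*} {l : Filter ι} [l.NeBot]
    {f : ι → ℝ} {c a : ℝ} (hf : Tendsto f l atTop) (hcf : Tendsto (fun i => c * f i) l (𝓝 a)) :
    c = 0 := by
  by_contra hc
  refine not_tendsto_atTop_of_tendsto_nhds (hcf.const_mul c⁻¹) (hf.congr fun i => ?_)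
  rw [inv_mul_cancel_left₀ hc]

theorem Matrix.mulVec_smul_dotProduct_smul {n R : Type*} [Fintype n] [CommSemiring R]
    (Q : Matrix n n R) (r : R) (v : n → R) :
    Q *ᵥ (r • v) ⬝ᵥ (r • v) = r ^ 2 * (Q *ᵥ v ⬝ᵥ v) := by
  rw [mulVec_smul, smul_dotProduct, dotProduct_smul, smul_eq_mul, smul_eq_mul]
  ring

theorem stmt19_general (d : ℕ) (Q : Matrix (Fin d) (Fin d) ℝ)
    (α : ℝ) (hα : α ∈ Set.Ioo (1:ℝ) 2) (c : ℝ)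
    (G : ℝ → EuclideanSpace ℝ (Fin d))
    (hGne : ∀ x > (0:ℝ), G x ≠ 0)
    (hnorm0 : Tendsto (fun x => ‖G x‖) (nhdsWithin 0 (Set.Ioi 0)) (nhds 0))
    (G₀ : EuclideanSpace ℝ (Fin d))
    (hG₀ : Tendsto (fun x => (‖G x‖)⁻¹ • G x) (nhdsWithin 0 (Set.Ioi 0)) (nhds G₀))
    (L : ℝ) (hL : 0 < L)
    (hxG : Tendsto (fun x => x / ‖G x‖ ^ α) (nhdsWithin 0 (Set.Ioi 0)) (nhds L))
    (hlin : ∀ x > (0:ℝ), (1/2) * (Q.mulVec (G x) ⬝ᵥ (G x)) = c * x) :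
    c = 0 := by
  have hG_pos : ∀ᶠ x in 𝓝[>] 0, 0 < ‖G x‖ := by
    filter_upwards [self_mem_nhdsWithin] with x hx
    exact norm_pos_iff.2 (hGne x hx)
  have hratio : Tendsto (fun x => x / ‖G x‖ ^ 2) (𝓝[>] 0) atTop :=
    tendsto_div_sq_atTop_of_tendsto_div_rpow hα.2 hL
      (tendsto_nhdsWithin_iff.2 ⟨hnorm0, hG_pos⟩) hxG
  have hquad : Continuous fun v : EuclideanSpace ℝ (Fin d) => Q *ᵥ v ⬝ᵥ v := by fun_prop
  have hlim := (hquad.tendsto G₀).comp hG₀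
  refine (mul_eq_zero.1 (eq_zero_of_tendsto_const_mul_of_tendsto_atTop hratio
    (hlim.congr' ?_))).resolve_left two_ne_zero
  filter_upwards [self_mem_nhdsWithin, hG_pos] with x hx hGx
  simp only [Function.comp_apply, WithLp.ofLp_smul, mulVec_smul_dotProduct_smul]
  rw [show Q *ᵥ G x ⬝ᵥ G x = 2 * (c * x) by linarith [hlin x hx]]
  field_simp

/-- If `Q` is symmetric positive semidefinite, `|G(x)| → 0` as `x → 0+`,
`G(x)/|G(x)| → G₀`, `x/|G(x)|^α → L ∈ (0,∞)` for some `α ∈ (1,2)`, and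
`(1/2)⟨QG(x), G(x)⟩ = c·x` for all `x > 0` with `c ≥ 0`, then `c = 0`. -/
theorem stmt19 (d : ℕ) (Q : Matrix (Fin d) (Fin d) ℝ) (hQ : Q.PosSemidef)
    (α : ℝ) (hα : α ∈ Set.Ioo (1:ℝ) 2) (c : ℝ) (hc : 0 ≤ c)
    (G : ℝ → EuclideanSpace ℝ (Fin d))
    (hGne : ∀ x > (0:ℝ), G x ≠ 0)
    (hnorm0 : Tendsto (fun x => ‖G x‖) (nhdsWithin 0 (Set.Ioi 0)) (nhds 0))
    (G₀ : EuclideanSpace ℝ (Fin d))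
    (hG₀ : Tendsto (fun x => (‖G x‖)⁻¹ • G x) (nhdsWithin 0 (Set.Ioi 0)) (nhds G₀))
    (L : ℝ) (hL : 0 < L)
    (hxG : Tendsto (fun x => x / ‖G x‖ ^ α) (nhdsWithin 0 (Set.Ioi 0)) (nhds L))
    (hlin : ∀ x > (0:ℝ), (1/2) * (Q.mulVec (G x) ⬝ᵥ (G x)) = c * x) :
    c = 0 :=
  stmt19_general d Q α hα c G hGne hnorm0 G₀ hG₀ L hL hxG hlin
end
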